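/- arXiv:2206.13086 — 6 statements merged into one kernel-verified Lean document; each statement's English description precedes it below -/
import Mathlib

section
/- Assume γ ≥ 0 and that p_1, …, p_d are pairwise distinct. For τ ∈ {0, …, d} let J_τ ⊆ {1, …, d} be the set of indices of the τ largest values among p_1, …, p_d (with J_0 = ∅), and define π(τ) = Σ_{j∈J_τ} Σ_{l=0}^{d−1} (2 p_j/(τ+l+γ+1)) P(Γ_{∖j} = l) + Σ_{l=0}^{d} (γ/(τ+l+γ)) P(Γ = l), with the convention γ/(τ+l+γ) := 0 when τ = l = γ = 0. Then a vector v ∈ {0,1}^d is a maximizer of v ↦ Dice_γ(v; p) over {0,1}^d if and only if v is the indicator vector of J_{τ*} for some τ* maximizing π over {0, 1, …, d}. -/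
/-!
Write `V` for the support of `v` and `τ = #V`. By linearity of expectation,
`Dice_γ(v) = Σ_{j ∈ V} g_τ(j) + E[γ / (Γ + τ + γ)]` with `g_τ(j) = E[2 Y_j / (Γ + τ + γ)]`,
and `π(τ)` is the same expression with `V = J_τ`. Conditioning on `Y_j` and `Y_k` gives
`g_τ(j) - g_τ(k) = 2 (p_j - p_k) E[1 / (Γ_{∖{j,k}} + τ + γ + 1)]`, so `g_τ` is strictly
increasing in `p_j`, and an exchange argument shows `Dice_γ(v) ≤ π(τ)` with equality iff
`V = J_τ`; both directions of the equivalence reduce to this, since the indicator of `J_τ`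
has Dice score exactly `π(τ)`.
-/

open Finset

/-- Weight of a binary configuration `y` under independent Bernoulli probabilities `p`:
`P(Y = y) = ∏ⱼ pⱼ^{yⱼ} (1-pⱼ)^{1-yⱼ}`. -/
noncomputable def bw {d : ℕ} (p : Fin d → ℝ) (y : Fin d → Bool) : ℝ :=
  ∏ j, if y j = true then p j else 1 - p j

/-- Number of `true` coordinates of `y`. -/
def cnt {d : ℕ} (y : Fin d → Bool) : ℕ :=
  (Finset.univ.filter (fun j => y j = true)).card

/-- The Dice score `Dice_γ(v; p) = E[(2 Σⱼ vⱼ Yⱼ + γ)/(Σⱼ Yⱼ + Σⱼ vⱼ + γ)]`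
for independent Bernoulli `Yⱼ` with success probabilities `pⱼ` (convention 0/0 = 0,
which is Lean's division). -/
noncomputable def dice {d : ℕ} (γ : ℝ) (p : Fin d → ℝ) (v : Fin d → Bool) : ℝ :=
  ∑ y : Fin d → Bool, bw p y *
    ((2 * ((Finset.univ.filter (fun j => v j = true ∧ y j = true)).card : ℝ) + γ) /
      ((cnt y : ℝ) + (cnt v : ℝ) + γ))

/-- `P(Γ_S = l)` where `Γ_S = Σ_{j ∈ S} Yⱼ` is a Poisson-binomial random variable. -/
noncomputable def pmfOn {d : ℕ} (S : Finset (Fin d)) (p : Fin d → ℝ) (l : ℕ) : ℝ :=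
  ∑ y : Fin d → Bool,
    if (∀ j, j ∉ S → y j = false) ∧ (S.filter (fun j => y j = true)).card = l then
      ∏ j ∈ S, (if y j = true then p j else 1 - p j)
    else 0

/-- Index set of the `τ` largest values among `p_1, …, p_d` (for pairwise distinct `p`). -/
noncomputable def topIdx {d : ℕ} (p : Fin d → ℝ) (τ : ℕ) : Finset (Fin d) :=
  Finset.univ.filter (fun j => (Finset.univ.filter (fun j' => p j ≤ p j')).card ≤ τ)

/-- The volume score
`π(τ) = Σ_{j ∈ J_τ} Σ_{l=0}^{d-1} (2 pⱼ/(τ+l+γ+1)) P(Γ_{∖j}=l)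
        + Σ_{l=0}^{d} (γ/(τ+l+γ)) P(Γ=l)`
(the convention `γ/(τ+l+γ) := 0` when `τ = l = γ = 0` is Lean's `0/0 = 0`). -/
noncomputable def diceScore {d : ℕ} (γ : ℝ) (p : Fin d → ℝ) (τ : ℕ) : ℝ :=
  (∑ j ∈ topIdx p τ, ∑ l ∈ Finset.range d,
      (2 * p j / ((τ : ℝ) + (l : ℝ) + γ + 1)) * pmfOn (Finset.univ.erase j) p l)
  + ∑ l ∈ Finset.range (d + 1), (γ / ((τ : ℝ) + (l : ℝ) + γ)) * pmfOn Finset.univ p l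

theorem sum_boolFun_eq_sum_finset {ι M : Type*} [Fintype ι] [DecidableEq ι] [AddCommMonoid M]
    (F : (ι → Bool) → M) :
    ∑ y : ι → Bool, F y = ∑ T : Finset ι, F fun j => decide (j ∈ T) :=
  Fintype.sum_equiv
    { toFun := fun y => univ.filter fun j => y j = true
      invFun := fun T j => decide (j ∈ T)
      left_inv := fun y => by funext j; simp
      right_inv := fun T => by ext j; simp } _ _ fun y => by congr; funext j; simp

theorem exists_eq_decide_mem {ι : Type*} [Fintype ι] [DecidableEq ι] (w : ι → Bool) :
    ∃ W : Finset ι, w = fun j => decide (j ∈ W) :=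
  ⟨univ.filter fun j => w j = true, by funext j; simp⟩

theorem sum_mul_pos_of_sum_eq_one {ι : Type*} {s : Finset ι} {w f : ι → ℝ}
    (hw : ∀ i ∈ s, 0 ≤ w i) (hsum : ∑ i ∈ s, w i = 1) (hf : ∀ i ∈ s, 0 < f i) :
    0 < ∑ i ∈ s, w i * f i := by
  obtain ⟨i, hi, hwi⟩ := exists_lt_of_sum_lt (s := s) (f := 0) (g := w) (by simp [hsum])
  exact sum_pos' (fun j hj => mul_nonneg (hw j hj) (hf j hj).le) ⟨i, hi, mul_pos hwi (hf i hi)⟩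

theorem sum_lt_sum_of_card_eq_of_forall_lt {ι M : Type*} [DecidableEq ι] [AddCommMonoid M]
    [LinearOrder M] [IsOrderedCancelAddMonoid M] {V W : Finset ι} {c : ι → M}
    (hcard : #V = #W) (hne : V ≠ W) (hlt : ∀ i ∈ V \ W, ∀ j ∈ W \ V, c i < c j) :
    ∑ i ∈ V, c i < ∑ i ∈ W, c i := by
  rw [← sum_sdiff_lt_sum_sdiff]
  have hcard' : #(V \ W) = #(W \ V) := card_sdiff_comm hcard
  have hWV : (W \ V).Nonempty :=
    sdiff_nonempty.2 fun h => hne (eq_of_subset_of_card_le h hcard.le).symm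
  have hVW : (V \ W).Nonempty := card_pos.1 (hcard' ▸ hWV.card_pos)
  obtain ⟨a, ha, hmin⟩ := exists_min_image (W \ V) c hWV
  calc ∑ i ∈ V \ W, c i < ∑ _i ∈ V \ W, c a := sum_lt_sum_of_nonempty hVW fun i hi => hlt i hi a ha
    _ = #(W \ V) • c a := by rw [sum_const, hcard']
    _ ≤ ∑ i ∈ W \ V, c i := card_nsmul_le_sum _ _ _ hmin

section OutcomeProb

variable {ι : Type*} [DecidableEq ι]

/-- For `T ⊆ S`, the probability that `{j ∈ S | Y j = 1} = T`. -/
noncomputable def outcomeProb (p : ι → ℝ) (S T : Finset ι) : ℝ :=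
  ∏ j ∈ S, if j ∈ T then p j else 1 - p j

theorem outcomeProb_nonneg {p : ι → ℝ} (hp : ∀ j, p j ∈ Set.Icc (0 : ℝ) 1)
    (S T : Finset ι) : 0 ≤ outcomeProb p S T :=
  prod_nonneg fun j _ => by split_ifs <;> linarith [(hp j).1, (hp j).2]

/-- Conditioning on `Y k`. -/
theorem sum_powerset_insert_outcomeProb_mul (p : ι → ℝ) {S : Finset ι} {k : ι} (hk : k ∉ S)
    (g : Finset ι → ℝ) :
    ∑ T ∈ (insert k S).powerset, outcomeProb p (insert k S) T * g T =
      ∑ T ∈ S.powerset, outcomeProb p S T * ((1 - p k) * g T + p k * g (insert k T)) := by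
  rw [sum_powerset_insert hk, ← sum_add_distrib]
  refine sum_congr rfl fun T hT => ?_
  have hkT : k ∉ T := fun h => hk (mem_powerset.1 hT h)
  have hinsert : outcomeProb p S (insert k T) = outcomeProb p S T :=
    prod_congr rfl fun j hj => by
      rw [if_congr (mem_insert.trans (or_iff_right (ne_of_mem_of_not_mem hj hk))) rfl rfl]
  rw [outcomeProb, outcomeProb, prod_insert hk, prod_insert hk, if_neg hkT,
    if_pos (mem_insert_self k T), ← outcomeProb, ← outcomeProb, hinsert]
  ring

theorem sum_powerset_outcomeProb (p : ι → ℝ) (S : Finset ι) :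
    ∑ T ∈ S.powerset, outcomeProb p S T = 1 := by
  induction S using Finset.induction_on with
  | empty => simp [outcomeProb]
  | insert k S hk ih =>
    simpa [ih] using sum_powerset_insert_outcomeProb_mul p hk fun _ => 1

end OutcomeProb

section ValueRank

variable {ι α : Type*} [Fintype ι] [LinearOrder α]

def valueRank (p : ι → α) (j : ι) : ℕ :=
  #{i | p j ≤ p i}

theorem valueRank_le_valueRank {p : ι → α} {j k : ι} (h : p j ≤ p k) :
    valueRank p k ≤ valueRank p j :=
  card_le_card fun i hi => by
    simp only [mem_filter, mem_univ, true_and] at hi ⊢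
    exact h.trans hi

theorem valueRank_lt_valueRank {p : ι → α} {j k : ι} (h : p j < p k) :
    valueRank p k < valueRank p j :=
  card_lt_card ⟨fun i hi => by
    simp only [mem_filter, mem_univ, true_and] at hi ⊢
    exact h.le.trans hi, fun hsub =>
    (show p k ≤ p j by simpa using hsub (mem_filter.2 ⟨mem_univ j, le_rfl⟩)).not_gt h⟩

theorem valueRank_injective {p : ι → α} (hp : Function.Injective p) :
    Function.Injective (valueRank p) := by
  intro j k h
  rcases lt_trichotomy (p j) (p k) with hjk | hjk | hjk
  · exact absurd h (valueRank_lt_valueRank hjk).ne'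
  · exact hp hjk
  · exact absurd h (valueRank_lt_valueRank hjk).ne

theorem image_valueRank {p : ι → α} (hp : Function.Injective p) :
    univ.image (valueRank p) = Icc 1 (Fintype.card ι) := by
  refine eq_of_subset_of_card_le (fun n hn => ?_) ?_
  · obtain ⟨j, -, rfl⟩ := mem_image.1 hn
    exact mem_Icc.2 ⟨card_pos.2 ⟨j, by simp⟩, card_le_univ _⟩
  · rw [card_image_of_injective _ (valueRank_injective hp), Nat.card_Icc, card_univ]
    omega

theorem card_filter_valueRank_le {p : ι → α} (hp : Function.Injective p) {τ : ℕ}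
    (hτ : τ ≤ Fintype.card ι) : #{j | valueRank p j ≤ τ} = τ := by
  rw [← card_image_of_injective _ (valueRank_injective hp), ← filter_image (p := (· ≤ τ)), image_valueRank hp,
    show (Icc 1 (Fintype.card ι)).filter (· ≤ τ) = Icc 1 τ by ext; simp; omega, Nat.card_Icc]
  omega

end ValueRank

section Dice

variable {d : ℕ}

theorem pmfOn_eq_sum_powersetCard (S : Finset (Fin d)) (p : Fin d → ℝ) (l : ℕ) :
    pmfOn S p l = ∑ T ∈ S.powersetCard l, outcomeProb p S T := by
  rw [pmfOn, sum_boolFun_eq_sum_finset, ← sum_filter]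
  refine sum_congr ?_ fun T _ => by simp [outcomeProb]
  ext T
  have : (∀ j ∉ S, j ∉ T) ↔ T ⊆ S := ⟨fun h j hj => by_contra fun hjS => h j hjS hj,
    fun h j hjS hj => hjS (h hj)⟩
  simp only [mem_filter, mem_univ, true_and, mem_powersetCard, decide_eq_false_iff_not,
    decide_eq_true_eq, this]
  exact and_congr_right fun h => by rw [filter_mem_eq_inter, inter_eq_right.2 h]

theorem sum_powerset_outcomeProb_mul_card (S : Finset (Fin d)) (p : Fin d → ℝ) (f : ℕ → ℝ) :
    ∑ T ∈ S.powerset, outcomeProb p S T * f #T =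
      ∑ l ∈ range (#S + 1), pmfOn S p l * f l := by
  rw [sum_powerset]
  refine sum_congr rfl fun l _ => ?_
  rw [pmfOn_eq_sum_powersetCard, sum_mul]
  exact sum_congr rfl fun T hT => by rw [(mem_powersetCard.1 hT).2]

/-- `E[2 Y j / (Γ + τ + γ)]`, in the form in which it appears in `diceScore`. -/
noncomputable def diceGain (γ : ℝ) (p : Fin d → ℝ) (τ : ℕ) (j : Fin d) : ℝ :=
  ∑ l ∈ range d, (2 * p j / ((τ : ℝ) + (l : ℝ) + γ + 1)) * pmfOn (univ.erase j) p l

/-- `E[γ / (Γ + τ + γ)]`, in the form in which it appears in `diceScore`. -/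
noncomputable def diceOffset (γ : ℝ) (p : Fin d → ℝ) (τ : ℕ) : ℝ :=
  ∑ l ∈ range (d + 1), (γ / ((τ : ℝ) + (l : ℝ) + γ)) * pmfOn univ p l

theorem diceScore_eq (γ : ℝ) (p : Fin d → ℝ) (τ : ℕ) :
    diceScore γ p τ = ∑ j ∈ topIdx p τ, diceGain γ p τ j + diceOffset γ p τ :=
  rfl

theorem diceGain_eq_sum_powerset (γ : ℝ) (p : Fin d → ℝ) (τ : ℕ) (j : Fin d) :
    diceGain γ p τ j = ∑ T ∈ (univ.erase j).powerset,
      outcomeProb p (univ.erase j) T * (2 * p j / ((τ : ℝ) + #T + γ + 1)) := by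
  have hcard : #(univ.erase j) + 1 = d := by
    rw [card_erase_of_mem (mem_univ j), card_univ, Fintype.card_fin]
    have := j.pos
    omega
  rw [sum_powerset_outcomeProb_mul_card _ p fun l => 2 * p j / ((τ : ℝ) + l + γ + 1), hcard,
    diceGain]
  exact sum_congr rfl fun l _ => mul_comm _ _

theorem diceOffset_eq_sum_powerset (γ : ℝ) (p : Fin d → ℝ) (τ : ℕ) :
    diceOffset γ p τ =
      ∑ T ∈ (univ : Finset (Fin d)).powerset, outcomeProb p univ T * (γ / ((τ : ℝ) + #T + γ)) := by
  rw [sum_powerset_outcomeProb_mul_card _ p fun l => γ / ((τ : ℝ) + l + γ), card_univ,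
    Fintype.card_fin, diceOffset]
  exact sum_congr rfl fun l _ => mul_comm _ _

theorem sum_powerset_outcomeProb_mul_ite_mem (p : Fin d → ℝ) (j : Fin d) (f : ℕ → ℝ) :
    ∑ T ∈ (univ : Finset (Fin d)).powerset, outcomeProb p univ T * (if j ∈ T then f #T else 0) =
      ∑ T ∈ (univ.erase j).powerset, outcomeProb p (univ.erase j) T * (p j * f (#T + 1)) := by
  conv_lhs => rw [← insert_erase (mem_univ j)]
  rw [sum_powerset_insert_outcomeProb_mul p (notMem_erase j univ)]
  refine sum_congr rfl fun T hT => ?_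
  have hjT : j ∉ T := fun h => notMem_erase j univ (mem_powerset.1 hT h)
  simp [hjT, card_insert_of_notMem hjT]

theorem dice_indicator_eq_sum_powerset (γ : ℝ) (p : Fin d → ℝ) (V : Finset (Fin d)) :
    dice γ p (fun j => decide (j ∈ V)) = ∑ T ∈ (univ : Finset (Fin d)).powerset,
      outcomeProb p univ T * ((2 * (#(V ∩ T) : ℝ) + γ) / ((#T : ℝ) + #V + γ)) := by
  rw [dice, sum_boolFun_eq_sum_finset, powerset_univ]
  refine sum_congr rfl fun T _ => ?_
  congr 1
  · simp [bw, outcomeProb]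
  · have hinter : univ.filter (fun j => j ∈ V ∧ j ∈ T) = V ∩ T := by ext; simp
    simp [cnt, hinter]

theorem dice_indicator_eq (γ : ℝ) (p : Fin d → ℝ) (V : Finset (Fin d)) :
    dice γ p (fun j => decide (j ∈ V)) =
      ∑ j ∈ V, diceGain γ p #V j + diceOffset γ p #V := by
  have hsplit : ∀ T : Finset (Fin d), (2 * (#(V ∩ T) : ℝ) + γ) / ((#T : ℝ) + #V + γ) =
      ∑ j ∈ V, (if j ∈ T then 2 / ((#T : ℝ) + #V + γ) else 0) + γ / ((#V : ℝ) + #T + γ) := by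
    intro T
    rw [← filter_mem_eq_inter, natCast_card_filter, add_div, mul_sum, sum_div, add_comm (#V : ℝ)]
    congr 1
    exact sum_congr rfl fun j _ => by split_ifs <;> ring
  simp_rw [dice_indicator_eq_sum_powerset, hsplit, mul_add, sum_add_distrib, mul_sum]
  rw [sum_comm, diceOffset_eq_sum_powerset]
  congr 1
  refine sum_congr rfl fun j _ => ?_
  rw [sum_powerset_outcomeProb_mul_ite_mem p j fun n => 2 / ((n : ℝ) + #V + γ),
    diceGain_eq_sum_powerset]
  refine sum_congr rfl fun T _ => ?_
  push_cast
  ring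

theorem diceGain_lt_diceGain {γ : ℝ} (hγ : 0 ≤ γ) {p : Fin d → ℝ}
    (hp : ∀ j, p j ∈ Set.Icc (0 : ℝ) 1) (τ : ℕ) {j k : Fin d} (hlt : p k < p j) :
    diceGain γ p τ k < diceGain γ p τ j := by
  have hjk : j ≠ k := fun h => hlt.ne (congrArg p h.symm)
  set U := (univ.erase j).erase k
  have hj : univ.erase j = insert k U := (insert_erase (mem_erase.2 ⟨hjk.symm, mem_univ k⟩)).symm
  have hk : univ.erase k = insert j U := by
    rw [show U = (univ.erase k).erase j from erase_right_comm]
    exact (insert_erase (mem_erase.2 ⟨hjk, mem_univ j⟩)).symm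
  have hjU : j ∉ U := fun h => (mem_erase.1 (mem_erase.1 h).2).1 rfl
  have hkU : k ∉ U := fun h => (mem_erase.1 h).1 rfl
  clear_value U
  have hdiff : diceGain γ p τ j - diceGain γ p τ k = ∑ T ∈ U.powerset,
      outcomeProb p U T * (2 * (p j - p k) / ((τ : ℝ) + #T + γ + 1)) := by
    rw [diceGain_eq_sum_powerset, diceGain_eq_sum_powerset, hj, hk,
      sum_powerset_insert_outcomeProb_mul p hkU, sum_powerset_insert_outcomeProb_mul p hjU,
      ← sum_sub_distrib]
    refine sum_congr rfl fun T hT => ?_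
    have hTU := mem_powerset.1 hT
    rw [card_insert_of_notMem fun h => hkU (hTU h), card_insert_of_notMem fun h => hjU (hTU h)]
    ring
  have hpos : 0 < ∑ T ∈ U.powerset,
      outcomeProb p U T * (2 * (p j - p k) / ((τ : ℝ) + #T + γ + 1)) :=
    sum_mul_pos_of_sum_eq_one (fun T _ => outcomeProb_nonneg hp U T)
      (sum_powerset_outcomeProb p U) fun T _ => div_pos (by linarith) (by positivity)
  linarith

end Dice

section TopIdx

variable {d : ℕ} {p : Fin d → ℝ}

theorem card_topIdx (hp : Function.Injective p) {τ : ℕ} (hτ : τ ≤ d) : #(topIdx p τ) = τ :=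
  card_filter_valueRank_le hp (by rwa [Fintype.card_fin])

theorem lt_of_mem_topIdx_of_notMem {τ : ℕ} {j k : Fin d} (hj : j ∈ topIdx p τ)
    (hk : k ∉ topIdx p τ) : p k < p j :=
  lt_of_not_ge fun h => hk (mem_filter.2 ⟨mem_univ k,
    (valueRank_le_valueRank h).trans (mem_filter.1 hj).2⟩)

variable {γ : ℝ}

theorem dice_indicator_topIdx (hp : Function.Injective p) {τ : ℕ} (hτ : τ ≤ d) :
    dice γ p (fun j => decide (j ∈ topIdx p τ)) = diceScore γ p τ := by
  rw [dice_indicator_eq, card_topIdx hp hτ, diceScore_eq]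

theorem dice_indicator_lt_diceScore (hγ : 0 ≤ γ) (hp : ∀ j, p j ∈ Set.Icc (0 : ℝ) 1)
    (hdist : Function.Injective p) {V : Finset (Fin d)} (hV : V ≠ topIdx p #V) :
    dice γ p (fun j => decide (j ∈ V)) < diceScore γ p #V := by
  rw [dice_indicator_eq, diceScore_eq, add_lt_add_iff_right]
  refine sum_lt_sum_of_card_eq_of_forall_lt
    (card_topIdx hdist (card_finset_fin_le V)).symm hV
    fun i hi j hj => diceGain_lt_diceGain hγ hp _ ?_
  exact lt_of_mem_topIdx_of_notMem (mem_sdiff.1 hj).1 (mem_sdiff.1 hi).2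

theorem dice_indicator_le_diceScore (hγ : 0 ≤ γ) (hp : ∀ j, p j ∈ Set.Icc (0 : ℝ) 1)
    (hdist : Function.Injective p) (V : Finset (Fin d)) :
    dice γ p (fun j => decide (j ∈ V)) ≤ diceScore γ p #V := by
  rcases eq_or_ne V (topIdx p #V) with hV | hV
  · conv_lhs => rw [hV]
    exact (dice_indicator_topIdx hdist (card_finset_fin_le V)).le
  · exact (dice_indicator_lt_diceScore hγ hp hdist hV).le

end TopIdx

theorem dice_bayes_rule_general {d : ℕ} (γ : ℝ) (hγ : 0 ≤ γ)
    (p : Fin d → ℝ) (hp : ∀ j, p j ∈ Set.Icc (0 : ℝ) 1)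
    (hdist : Function.Injective p) (v : Fin d → Bool) :
    (∀ w : Fin d → Bool, dice γ p w ≤ dice γ p v) ↔
      ∃ τ ≤ d, (∀ τ' ≤ d, diceScore γ p τ' ≤ diceScore γ p τ) ∧
        v = fun j => decide (j ∈ topIdx p τ) := by
  obtain ⟨V, rfl⟩ := exists_eq_decide_mem v
  constructor
  · intro hmax
    have hV : V = topIdx p #V := by
      by_contra hne
      have := hmax fun j => decide (j ∈ topIdx p #V)
      rw [dice_indicator_topIdx hdist (card_finset_fin_le V)] at this
      exact (dice_indicator_lt_diceScore hγ hp hdist hne).not_ge this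
    have hvV : dice γ p (fun j => decide (j ∈ V)) = diceScore γ p #V := by
      conv_lhs => rw [hV]
      exact dice_indicator_topIdx hdist (card_finset_fin_le V)
    refine ⟨#V, card_finset_fin_le V, fun τ' hτ' => ?_, by rw [← hV]⟩
    rw [← hvV, ← dice_indicator_topIdx hdist hτ']
    exact hmax _
  · rintro ⟨τ, hτ, hmax, hv⟩ w
    obtain ⟨W, rfl⟩ := exists_eq_decide_mem w
    rw [hv, dice_indicator_topIdx hdist hτ]
    exact (dice_indicator_le_diceScore hγ hp hdist W).trans (hmax _ (card_finset_fin_le W))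

/-- **The Bayes rule for Dice-segmentation.** `v` maximizes `Dice_γ(·; p)` over `{0,1}^d`
iff `v` is the indicator of the top-`τ*` index set for some `τ*` maximizing `π` over
`{0, 1, …, d}`. -/
theorem dice_bayes_rule {d : ℕ} (hd : 1 ≤ d) (γ : ℝ) (hγ : 0 ≤ γ)
    (p : Fin d → ℝ) (hp : ∀ j, p j ∈ Set.Icc (0 : ℝ) 1)
    (hdist : Function.Injective p) (v : Fin d → Bool) :
    (∀ w : Fin d → Bool, dice γ p w ≤ dice γ p v) ↔
      ∃ τ ≤ d, (∀ τ' ≤ d, diceScore γ p τ' ≤ diceScore γ p τ) ∧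
        v = fun j => decide (j ∈ topIdx p τ) :=
  dice_bayes_rule_general γ hγ p hp hdist v
end

section
/- Let d = 2, γ = 0, p_1 = 0.45 and p_2 = 0.44, with Y_1, Y_2 independent Bernoulli(p_1), Bernoulli(p_2). Then Dice_0((1,1); p) = (2/3)(p_1 + p_2) − (1/3) p_1 p_2 and this value is strictly larger than each of Dice_0((1,0); p), Dice_0((0,1); p) and Dice_0((0,0); p); in particular, the 0.5-thresholding rule 1(p ≥ 0.5) = (0,0) is not a maximizer of Dice_0(·; p) over {0,1}², so thresholding the true conditional probabilities at 0.5 is not Dice-calibrated. -/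
open Finset

/-!
For `d = 2` and `γ = 0` the Dice scores are explicit polynomials in `p`:
`Dice((1,1)) = (2/3)(p₁ + p₂) - p₁p₂/3`, `Dice((1,0)) = p₁ - p₁p₂/3`, `Dice((0,1)) = p₂ - p₁p₂/3`
and `Dice((0,0)) = 0`. Hence `Dice((1,1)) - Dice((1,0)) = (2p₂ - p₁)/3` and symmetrically, so
predicting both labels beats each alternative as soon as `p₁ < 2p₂`, `p₂ < 2p₁` and `p ≠ 0`,
even when both `pⱼ` are below `1/2`.
-/

theorem sum_fun_fin_two_bool {M : Type*} [AddCommMonoid M] (f : (Fin 2 → Bool) → M) :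
    ∑ y, f y = f ![true, true] + f ![true, false] + f ![false, true] + f ![false, false] := by
  rw [← (piFinTwoEquiv fun _ => Bool).symm.sum_comp, Fintype.sum_prod_type]
  simp only [Fintype.sum_bool, add_assoc]
  rfl

theorem dice_zero_of_forall_eq_false {d : ℕ} (p : Fin d → ℝ) {v : Fin d → Bool}
    (hv : ∀ j, v j = false) : dice 0 p v = 0 := by
  simp [dice, hv]

theorem dice_zero_true_true (p : Fin 2 → ℝ) :
    dice 0 p ![true, true] = 2 / 3 * (p 0 + p 1) - 1 / 3 * (p 0 * p 1) := by
  simp only [dice, sum_fun_fin_two_bool, bw, cnt, Fin.prod_univ_two, card_filter, Fin.sum_univ_two]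
  norm_num
  ring

theorem dice_zero_true_false (p : Fin 2 → ℝ) :
    dice 0 p ![true, false] = p 0 - p 0 * p 1 / 3 := by
  simp only [dice, sum_fun_fin_two_bool, bw, cnt, Fin.prod_univ_two, card_filter, Fin.sum_univ_two]
  norm_num
  ring

theorem dice_zero_false_true (p : Fin 2 → ℝ) :
    dice 0 p ![false, true] = p 1 - p 0 * p 1 / 3 := by
  simp only [dice, sum_fun_fin_two_bool, bw, cnt, Fin.prod_univ_two, card_filter, Fin.sum_univ_two]
  norm_num
  ring

/-- **Thresholding at 0.5 is not Dice-calibrated.** With `d = 2`, `γ = 0`,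
`p = (0.45, 0.44)`: `Dice_0((1,1); p) = (2/3)(p₁+p₂) - (1/3)p₁p₂`, this value is strictly
larger than each of `Dice_0((1,0); p)`, `Dice_0((0,1); p)`, `Dice_0((0,0); p)`; the
0.5-thresholding rule `1(p ≥ 0.5)` is `(0,0)` and is not a maximizer of `Dice_0(·; p)`. -/
theorem thresholding_not_dice_calibrated :
    let p : Fin 2 → ℝ := ![0.45, 0.44]
    dice 0 p ![true, true] = 2 / 3 * (0.45 + 0.44) - 1 / 3 * (0.45 * 0.44) ∧
    dice 0 p ![true, false] < dice 0 p ![true, true] ∧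
    dice 0 p ![false, true] < dice 0 p ![true, true] ∧
    dice 0 p ![false, false] < dice 0 p ![true, true] ∧
    (fun j => decide ((1 / 2 : ℝ) ≤ p j)) = ![false, false] ∧
    ¬ (∀ w : Fin 2 → Bool,
        dice 0 p w ≤ dice 0 p (fun j => decide ((1 / 2 : ℝ) ≤ p j))) := by
  intro p
  have hthreshold : (fun j => decide ((1 / 2 : ℝ) ≤ p j)) = ![false, false] := by
    funext j; fin_cases j <;> norm_num [p]
  have hfalse : dice 0 p ![false, false] = 0 := dice_zero_of_forall_eq_false p (by decide)
  have htrue : dice 0 p ![true, true] = 2 / 3 * (0.45 + 0.44) - 1 / 3 * (0.45 * 0.44) :=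
    dice_zero_true_true p
  rw [hthreshold, hfalse, htrue, dice_zero_true_false, dice_zero_false_true]
  refine ⟨rfl, by norm_num [p], by norm_num [p], by norm_num, rfl, fun hmax => ?_⟩
  exact (hmax ![true, true]).not_gt (by rw [htrue]; norm_num)
end

section
/- For every γ ≥ 0 there exists a constant C > 0 depending only on γ such that for every integer d ≥ 1, all probability vectors p, q ∈ [0,1]^d, and every v ∈ {0,1}^d: |Dice_γ(v; q) − Dice_γ(v; p)| ≤ C Σ_{j=1}^{d} |q_j − p_j|. -/
/-!
The Dice score is the expectation, under the product Bernoulli law `bw p`, of a ratio lying in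
`[0, 1]` (this is where `γ ≥ 0` enters). Hence the difference of two scores is at most the
`ℓ¹` distance between the product laws `bw q` and `bw p`. Swapping the factors of a product of
probability vectors one coordinate at a time shows that this distance is at most the sum of the
distances of the factors, here `2 |qⱼ - pⱼ|`; so `C = 2` works for every `γ ≥ 0`.
-/

open Finset

open Function

section ProductWeights

variable {ι α : Type*} [Fintype ι] [DecidableEq ι]

theorem prod_update_apply {M : Type*} [CommMonoid M] (h : ι → α → M) (i : ι) (u : α → M)
    (y : ι → α) :
    ∏ j, update h i u j (y j) = u (y i) * ∏ j ∈ univ.erase i, h j (y j) := by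
  rw [← mul_prod_erase univ _ (mem_univ i), update_self]
  exact congrArg _ (prod_congr rfl fun j hj ↦ by rw [update_of_ne (ne_of_mem_erase hj)])

variable [Fintype α]

theorem sum_abs_prod_update_sub_prod_update (h : ι → α → ℝ) (h_nonneg : ∀ j a, 0 ≤ h j a)
    (i : ι) (u w : α → ℝ) :
    ∑ y : ι → α, |∏ j, update h i u j (y j) - ∏ j, update h i w j (y j)| =
      (∑ a, |u a - w a|) * ∏ j ∈ univ.erase i, ∑ a, h j a := by
  have hpoint : ∀ y : ι → α, |∏ j, update h i u j (y j) - ∏ j, update h i w j (y j)| =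
      ∏ j, update h i (fun a ↦ |u a - w a|) j (y j) := fun y ↦ by
    rw [prod_update_apply, prod_update_apply, prod_update_apply, ← sub_mul, abs_mul,
      abs_of_nonneg (prod_nonneg fun j _ ↦ h_nonneg j (y j))]
  rw [sum_congr rfl fun y _ ↦ hpoint y, ← Fintype.prod_sum, ← mul_prod_erase univ _ (mem_univ i),
    update_self]
  exact congrArg _ (prod_congr rfl fun j hj ↦ by rw [update_of_ne (ne_of_mem_erase hj)])

theorem sum_abs_prod_piecewise_sub_prod_le (f g : ι → α → ℝ)
    (hf_nonneg : ∀ j a, 0 ≤ f j a) (hg_nonneg : ∀ j a, 0 ≤ g j a)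
    (hf_sum : ∀ j, ∑ a, f j a = 1) (hg_sum : ∀ j, ∑ a, g j a = 1) (s : Finset ι) :
    ∑ y : ι → α, |∏ j, s.piecewise f g j (y j) - ∏ j, g j (y j)| ≤
      ∑ i ∈ s, ∑ a, |f i a - g i a| := by
  induction s using Finset.induction with
  | empty => simp
  | @insert i s hi ih =>
    set h := s.piecewise f g
    have h_nonneg : ∀ j a, 0 ≤ h j a := fun j a ↦ by
      by_cases hj : j ∈ s <;> simp [h, hj, hf_nonneg, hg_nonneg]
    have h_sum : ∀ j, ∑ a, h j a = 1 := fun j ↦ by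
      by_cases hj : j ∈ s <;> simp [h, hj, hf_sum, hg_sum]
    have h_eq : update h i (g i) = h := by
      rw [← piecewise_eq_of_notMem s f g hi, update_eq_self]
    have swap := sum_abs_prod_update_sub_prod_update h h_nonneg i (f i) (g i)
    rw [h_eq, prod_eq_one fun j _ ↦ h_sum j, mul_one] at swap
    rw [piecewise_insert, sum_insert hi, ← swap]
    calc _ ≤ ∑ y : ι → α, (|∏ j, update h i (f i) j (y j) - ∏ j, h j (y j)|
            + |∏ j, h j (y j) - ∏ j, g j (y j)|) :=
          sum_le_sum fun y _ ↦ abs_sub_le _ _ _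
      _ ≤ _ := by rw [sum_add_distrib]; gcongr

theorem sum_abs_prod_sub_prod_le (f g : ι → α → ℝ)
    (hf_nonneg : ∀ j a, 0 ≤ f j a) (hg_nonneg : ∀ j a, 0 ≤ g j a)
    (hf_sum : ∀ j, ∑ a, f j a = 1) (hg_sum : ∀ j, ∑ a, g j a = 1) :
    ∑ y : ι → α, |∏ j, f j (y j) - ∏ j, g j (y j)| ≤ ∑ i, ∑ a, |f i a - g i a| := by
  simpa using sum_abs_prod_piecewise_sub_prod_le f g hf_nonneg hg_nonneg hf_sum hg_sum univ

end ProductWeights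

def bernoulliWeight (t : ℝ) (b : Bool) : ℝ :=
  if b = true then t else 1 - t

theorem bernoulliWeight_nonneg {t : ℝ} (ht : t ∈ Set.Icc (0 : ℝ) 1) (b : Bool) :
    0 ≤ bernoulliWeight t b := by
  cases b <;> simp [bernoulliWeight, ht.1, ht.2]

theorem sum_bernoulliWeight (t : ℝ) : ∑ b, bernoulliWeight t b = 1 := by
  simp [bernoulliWeight]

theorem sum_abs_bernoulliWeight_sub (s t : ℝ) :
    ∑ b, |bernoulliWeight s b - bernoulliWeight t b| = 2 * |s - t| := by
  simp only [Fintype.sum_bool, bernoulliWeight, ↓reduceIte, Bool.false_eq_true,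
    sub_sub_sub_cancel_left, abs_sub_comm t s]
  ring

theorem bw_eq_prod {d : ℕ} (p : Fin d → ℝ) (y : Fin d → Bool) :
    bw p y = ∏ j, bernoulliWeight (p j) (y j) := rfl

theorem sum_abs_bw_sub_bw_le {d : ℕ} {p q : Fin d → ℝ}
    (hp : ∀ j, p j ∈ Set.Icc (0 : ℝ) 1) (hq : ∀ j, q j ∈ Set.Icc (0 : ℝ) 1) :
    ∑ y, |bw q y - bw p y| ≤ 2 * ∑ j, |q j - p j| := by
  simpa only [bw_eq_prod, sum_abs_bernoulliWeight_sub, ← mul_sum] using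
    sum_abs_prod_sub_prod_le (fun j ↦ bernoulliWeight (q j)) (fun j ↦ bernoulliWeight (p j))
      (fun j ↦ bernoulliWeight_nonneg (hq j)) (fun j ↦ bernoulliWeight_nonneg (hp j))
      (fun j ↦ sum_bernoulliWeight (q j)) (fun j ↦ sum_bernoulliWeight (p j))

noncomputable def diceRatio {d : ℕ} (γ : ℝ) (v y : Fin d → Bool) : ℝ :=
  (2 * ((Finset.univ.filter (fun j => v j = true ∧ y j = true)).card : ℝ) + γ) /
    ((cnt y : ℝ) + (cnt v : ℝ) + γ)

theorem dice_eq_sum {d : ℕ} (γ : ℝ) (p : Fin d → ℝ) (v : Fin d → Bool) :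
    dice γ p v = ∑ y, bw p y * diceRatio γ v y := rfl

theorem abs_diceRatio_le_one {d : ℕ} {γ : ℝ} (hγ : 0 ≤ γ) (v y : Fin d → Bool) :
    |diceRatio γ v y| ≤ 1 := by
  have hy : ((univ.filter fun j => v j = true ∧ y j = true).card : ℝ) ≤ cnt y := by
    exact_mod_cast card_le_card fun j ↦ by
      simp only [mem_filter, mem_univ, true_and]; exact And.right
  have hv : ((univ.filter fun j => v j = true ∧ y j = true).card : ℝ) ≤ cnt v := by
    exact_mod_cast card_le_card fun j ↦ by
      simp only [mem_filter, mem_univ, true_and]; exact And.left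
  rw [diceRatio, abs_of_nonneg (by positivity)]
  exact div_le_one_of_le₀ (by linarith) (by positivity)

theorem abs_sum_mul_sub_sum_mul_le {β : Type*} (s : Finset β) (a b r : β → ℝ)
    (hr : ∀ y ∈ s, |r y| ≤ 1) :
    |∑ y ∈ s, a y * r y - ∑ y ∈ s, b y * r y| ≤ ∑ y ∈ s, |a y - b y| := by
  rw [← sum_sub_distrib]
  refine (abs_sum_le_sum_abs _ _).trans (sum_le_sum fun y hy ↦ ?_)
  rw [← sub_mul, abs_mul]
  exact mul_le_of_le_one_right (abs_nonneg _) (hr y hy)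

/-- **L1-stability of the Dice score in the success probabilities.** For every `γ ≥ 0`
there is a constant `C > 0` depending only on `γ` such that for all `d ≥ 1`, all
probability vectors `p, q ∈ [0,1]^d` and every `v ∈ {0,1}^d`,
`|Dice_γ(v; q) - Dice_γ(v; p)| ≤ C Σⱼ |qⱼ - pⱼ|`. -/
theorem dice_l1_stability (γ : ℝ) (hγ : 0 ≤ γ) :
    ∃ C : ℝ, 0 < C ∧ ∀ d : ℕ, 1 ≤ d → ∀ p q : Fin d → ℝ,
      (∀ j, p j ∈ Set.Icc (0 : ℝ) 1) → (∀ j, q j ∈ Set.Icc (0 : ℝ) 1) →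
      ∀ v : Fin d → Bool,
        |dice γ q v - dice γ p v| ≤ C * ∑ j, |q j - p j| := by
  refine ⟨2, two_pos, fun d _ p q hp hq v ↦ ?_⟩
  rw [dice_eq_sum, dice_eq_sum]
  exact (abs_sum_mul_sub_sum_mul_le _ _ _ _ fun y _ ↦ abs_diceRatio_le_one hγ v y).trans
    (sum_abs_bw_sub_bw_le hp hq)
end

section
/- Let γ ≥ 0 and v ∈ {0,1}^d with ‖v‖₁ + γ > 0, and let I(v) = {j : v_j = 1} and τ = ‖v‖₁. Then the IoU score factorizes as IoU_γ(v; p) = (Σ_{j∈I(v)} p_j + γ) · E[ 1/(Γ_{∖I(v)} + τ + γ) ], where Γ_{∖I(v)} = Σ_{j∉I(v)} Y_j. -/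
open Finset

/-- The IoU score
`IoU_γ(v; p) = E[(Σⱼ vⱼYⱼ + γ)/(Σⱼ Yⱼ + Σⱼ vⱼ - Σⱼ vⱼYⱼ + γ)]`
for independent Bernoulli `Yⱼ` with success probabilities `pⱼ` (convention 0/0 = 0). -/
noncomputable def iou {d : ℕ} (γ : ℝ) (p : Fin d → ℝ) (v : Fin d → Bool) : ℝ :=
  ∑ y : Fin d → Bool, bw p y *
    ((((Finset.univ.filter (fun j => v j = true ∧ y j = true)).card : ℝ) + γ) /
      ((cnt y : ℝ) + (cnt v : ℝ) -
        ((Finset.univ.filter (fun j => v j = true ∧ y j = true)).card : ℝ) + γ))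

/-! The coordinates `Yⱼ` with `j ∈ I(v)` do not enter the denominator: since `Σⱼ Yⱼ`
splits as `Σ_{j ∈ I(v)} Yⱼ + Γ_{∖I(v)}`, the denominator is `Γ_{∖I(v)} + τ + γ`. By
linearity the IoU score is then `Σ_{j ∈ I(v)} E[Yⱼ · D] + γ E[D]` with
`D = 1/(Γ_{∖I(v)} + τ + γ)`, and each `E[Yⱼ · D] = pⱼ E[D]` because `D` is independent
of `Yⱼ`. -/

section Bernoulli

variable {d : ℕ} (p : Fin d → ℝ) (j : Fin d)

lemma bw_funSplitAt_symm (b : Bool) (f : {k // k ≠ j} → Bool) :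
    bw p ((Equiv.funSplitAt j Bool).symm (b, f)) =
      (if b = true then p j else 1 - p j) * ∏ k, if f k = true then p k else 1 - p k := by
  have hne (k : {k // k ≠ j}) : (k : Fin d) ≠ j := k.2
  rw [bw, Fintype.prod_eq_mul_prod_subtype_ne _ j]
  simp [Equiv.funSplitAt_symm_apply, hne]

lemma sum_eq_sum_funSplitAt_symm (g : (Fin d → Bool) → ℝ) :
    ∑ y, g y =
      ∑ b : Bool, ∑ f : {k // k ≠ j} → Bool, g ((Equiv.funSplitAt j Bool).symm (b, f)) := by
  rw [← (Equiv.funSplitAt j Bool).symm.sum_comp, Fintype.sum_prod_type]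

/-- `E[Yⱼ F] = pⱼ E[F]` for every `F` independent of `Yⱼ`. -/
lemma sum_ite_mul_bw_mul_of_forall_ne (F : (Fin d → Bool) → ℝ)
    (hF : ∀ y y', (∀ k ≠ j, y k = y' k) → F y = F y') :
    ∑ y, (if y j = true then 1 else 0) * (bw p y * F y) = p j * ∑ y, bw p y * F y := by
  have hF_symm (b : Bool) (f : {k // k ≠ j} → Bool) :
      F ((Equiv.funSplitAt j Bool).symm (b, f)) = F ((Equiv.funSplitAt j Bool).symm (true, f)) :=
    hF _ _ fun k hk => by simp [Equiv.funSplitAt_symm_apply, hk]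
  simp only [sum_eq_sum_funSplitAt_symm j, Fintype.sum_bool, bw_funSplitAt_symm, hF_symm,
    Equiv.funSplitAt_symm_apply, dite_true, if_true, Bool.false_eq_true, if_false, mul_sum,
    ← sum_add_distrib]
  exact sum_congr rfl fun f _ => by ring

end Bernoulli

section Counting

variable {ι : Type*} [Fintype ι]

lemma card_filter_and_add_card_filter_not_and (P Q : ι → Prop) [DecidablePred P]
    [DecidablePred Q] : #{i | P i ∧ Q i} + #{i | ¬P i ∧ Q i} = #{i | Q i} := by
  rw [← card_filter_add_card_filter_not P (s := {i | Q i}), filter_filter, filter_filter]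
  simp only [and_comm]

lemma card_filter_false_and_congr {v y y' : ι → Bool} {j : ι} (hvj : v j = true)
    (hyy' : ∀ k ≠ j, y k = y' k) :
    #{k | v k = false ∧ y k = true} = #{k | v k = false ∧ y' k = true} := by
  refine congrArg card (filter_congr fun k _ => ?_)
  by_cases hk : k = j
  · simp [hk, hvj]
  · simp [hyy' k hk]

end Counting

theorem iou_factorization_general {d : ℕ} (γ : ℝ) (p : Fin d → ℝ) (v : Fin d → Bool) :
    iou γ p v =
      ((∑ j ∈ Finset.univ.filter (fun j => v j = true), p j) + γ) *
        ∑ y : Fin d → Bool, bw p y *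
          (1 / (((Finset.univ.filter (fun j => v j = false ∧ y j = true)).card : ℝ) +
            (cnt v : ℝ) + γ)) := by
  set D : (Fin d → Bool) → ℝ :=
    fun y => 1 / ((#{j | v j = false ∧ y j = true} : ℝ) + cnt v + γ)
  have hsummand (y : Fin d → Bool) :
      bw p y * ((#{j | v j = true ∧ y j = true} + γ) /
        (cnt y + cnt v - #{j | v j = true ∧ y j = true} + γ)) =
      ∑ j ∈ {j | v j = true}, (if y j = true then 1 else 0) * (bw p y * D y) +
        γ * (bw p y * D y) := by
    have hsplit :
        #{j | v j = true ∧ y j = true} + #{j | v j = false ∧ y j = true} = cnt y := by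
      simpa [cnt] using card_filter_and_add_card_filter_not_and (v · = true) (y · = true)
    rw [← sum_mul, sum_boole, filter_filter, div_eq_mul_one_div, ← hsplit]
    push_cast
    ring
  have hindep (j) (hj : j ∈ ({j | v j = true} : Finset _)) :
      ∑ y, (if y j = true then 1 else 0) * (bw p y * D y) = p j * ∑ y, bw p y * D y :=
    sum_ite_mul_bw_mul_of_forall_ne p j D fun y y' hyy' => by
      simp only [D, card_filter_false_and_congr (by simpa using hj) hyy']
  simp only [iou, hsummand, sum_add_distrib]
  rw [sum_comm, sum_congr rfl hindep, ← mul_sum, ← sum_mul, add_mul]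

/-- **IoU factorization.** For `γ ≥ 0` and `v ∈ {0,1}^d` with `‖v‖₁ + γ > 0`,
`IoU_γ(v; p) = (Σ_{j ∈ I(v)} pⱼ + γ) · E[1/(Γ_{∖I(v)} + τ + γ)]`, where `τ = ‖v‖₁`
and `Γ_{∖I(v)} = Σ_{j ∉ I(v)} Yⱼ`. -/
theorem iou_factorization {d : ℕ} (γ : ℝ) (hγ : 0 ≤ γ) (p : Fin d → ℝ)
    (hp : ∀ j, p j ∈ Set.Icc (0 : ℝ) 1) (v : Fin d → Bool)
    (hv : 0 < (cnt v : ℝ) + γ) :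
    iou γ p v =
      ((∑ j ∈ Finset.univ.filter (fun j => v j = true), p j) + γ) *
        ∑ y : Fin d → Bool, bw p y *
          (1 / (((Finset.univ.filter (fun j => v j = false ∧ y j = true)).card : ℝ) +
            (cnt v : ℝ) + γ)) :=
  iou_factorization_general γ p v
end

section
/- Assume γ ≥ 0 and that p_1, …, p_d are pairwise distinct. For τ ∈ {0,…,d} let J_τ be the set of indices of the τ largest values among p_1, …, p_d (with J_0 = ∅), and define ϖ(τ) = (Σ_{j∈J_τ} p_j + γ) · Σ_{l=0}^{d−τ} P(Γ_{∖J_τ} = l)/(τ + l + γ), with the convention x/0 := 0 (which only arises when τ = l = γ = 0). Then a vector v ∈ {0,1}^d is a maximizer of v ↦ IoU_γ(v; p) over {0,1}^d if and only if v is the indicator vector of J_{τ*} for some τ* maximizing ϖ over {0, 1, …, d}. -/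
open Finset

/-- The IoU volume score
`ϖ(τ) = (Σ_{j ∈ J_τ} pⱼ + γ) · Σ_{l=0}^{d-τ} P(Γ_{∖J_τ} = l)/(τ + l + γ)`
(the convention `x/0 := 0`, arising only when `τ = l = γ = 0`, is Lean's division). -/
noncomputable def iouScore {d : ℕ} (γ : ℝ) (p : Fin d → ℝ) (τ : ℕ) : ℝ :=
  ((∑ j ∈ topIdx p τ, p j) + γ) *
    ∑ l ∈ Finset.range (d - τ + 1),
      pmfOn (Finset.univ \ topIdx p τ) p l / ((τ : ℝ) + (l : ℝ) + γ)

/-!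
Write `J` for the support of `v`. The numerator `Σ vⱼYⱼ + γ` involves only the trials in `J` and
the denominator equals `|J| + Γ_{∖J} + γ`, which involves only the trials outside `J`; by
independence `IoU_γ(1_J; p) = (Σ_{j∈J} pⱼ + γ) · E[1/(|J| + Γ_{∖J} + γ)]`, which is `ϖ(τ)` when
`J = J_τ`. Exchanging some `a ∈ J` for some `b ∉ J` with `pₐ < p_b` strictly increases this
quantity: conditioning on the other trials, the gain is `(p_b - pₐ)(B + (Σ_{J∖a} p + γ)(B - B'))`
with `B > 0` and `B ≥ B'`. Hence among sets of a given size `τ` the set `J_τ` is the unique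
maximizer, so the maximizers of the IoU are exactly the indicators of the `J_τ` with `τ`
maximizing `ϖ`.
-/

namespace IoUBayes

section SuccessSet

variable {ι : Type*} [DecidableEq ι] (p : ι → ℝ)

/-- The probability that, among the independent trials indexed by `S`, exactly those in `A`
succeed; `expectCard p S f` is then `E[f(Γ_S)]`. -/
noncomputable def successSetProb (S A : Finset ι) : ℝ :=
  (∏ j ∈ A, p j) * ∏ j ∈ S \ A, (1 - p j)

noncomputable def expectCard (S : Finset ι) (f : ℕ → ℝ) : ℝ :=
  ∑ A ∈ S.powerset, successSetProb p S A * f A.card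

variable {p}

lemma successSetProb_nonneg (hp : ∀ j, p j ∈ Set.Icc (0 : ℝ) 1) (S A : Finset ι) :
    0 ≤ successSetProb p S A :=
  mul_nonneg (prod_nonneg fun j _ => (hp j).1) (prod_nonneg fun j _ => sub_nonneg.2 (hp j).2)

lemma prod_ite_mem_eq_successSetProb {S A : Finset ι} (hA : A ⊆ S) :
    ∏ j ∈ S, (if j ∈ A then p j else 1 - p j) = successSetProb p S A := by
  rw [prod_ite, filter_mem_eq_inter, inter_eq_right.2 hA, filter_not, filter_mem_eq_inter,
    inter_eq_right.2 hA, successSetProb]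

lemma sum_successSetProb (S : Finset ι) : ∑ A ∈ S.powerset, successSetProb p S A = 1 := by
  simpa [successSetProb] using (prod_add p (fun j => 1 - p j) S).symm

lemma successSetProb_insert {a : ι} {S A : Finset ι} (ha : a ∉ S) (hA : A ⊆ S) :
    successSetProb p (insert a S) A = (1 - p a) * successSetProb p S A := by
  have haA : a ∉ A := fun h => ha (hA h)
  rw [successSetProb, successSetProb, insert_sdiff_of_notMem _ haA,
    prod_insert (fun h => ha (mem_sdiff.1 h).1)]
  ring

lemma successSetProb_insert_insert {a : ι} {S A : Finset ι} (ha : a ∉ S) (hA : A ⊆ S) :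
    successSetProb p (insert a S) (insert a A) = p a * successSetProb p S A := by
  rw [successSetProb, successSetProb, insert_sdiff_insert, sdiff_insert_of_notMem ha,
    prod_insert fun h => ha (hA h)]
  ring

lemma successSetProb_union {S T A B : Finset ι} (hST : Disjoint S T) (hA : A ⊆ S) (hB : B ⊆ T) :
    successSetProb p (S ∪ T) (A ∪ B) = successSetProb p S A * successSetProb p T B := by
  have hsdiff : (S ∪ T) \ (A ∪ B) = (S \ A) ∪ (T \ B) := by
    ext j
    simp only [mem_sdiff, mem_union]
    have := disjoint_left.1 hST
    grind
  rw [successSetProb, successSetProb, successSetProb, prod_union (hST.mono hA hB), hsdiff,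
    prod_union (hST.mono sdiff_subset sdiff_subset)]
  ring

lemma sum_powerset_union {β : Type*} [AddCommMonoid β] {S T : Finset ι} (hST : Disjoint S T)
    (F : Finset ι → β) :
    ∑ Y ∈ (S ∪ T).powerset, F Y = ∑ A ∈ S.powerset, ∑ B ∈ T.powerset, F (A ∪ B) := by
  rw [← sum_product']
  refine sum_nbij' (fun Y => (Y ∩ S, Y ∩ T)) (fun AB => AB.1 ∪ AB.2) ?_ ?_ ?_ ?_ ?_
  · intro Y _
    simp [inter_subset_right]
  · intro AB hAB
    simp only [mem_product, mem_powerset] at hAB ⊢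
    exact union_subset_union hAB.1 hAB.2
  · intro Y hY
    rw [← inter_union_distrib_left, inter_eq_left.2 (mem_powerset.1 hY)]
  · rintro ⟨A, B⟩ hAB
    simp only [mem_product, mem_powerset] at hAB
    have hS := subset_iff.1 hAB.1
    have hT := subset_iff.1 hAB.2
    have hST' := disjoint_left.1 hST
    ext j <;> simp only [mem_inter, mem_union] <;> grind
  · intro Y hY
    rw [← inter_union_distrib_left, inter_eq_left.2 (mem_powerset.1 hY)]

lemma expectCard_insert {b : ι} {S : Finset ι} (hb : b ∉ S) (f : ℕ → ℝ) :
    expectCard p (insert b S) f =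
      (1 - p b) * expectCard p S f + p b * expectCard p S (fun m => f (m + 1)) := by
  rw [expectCard, sum_powerset_insert hb, expectCard, expectCard, mul_sum, mul_sum]
  congr 1 <;> refine sum_congr rfl fun A hA => ?_
  · rw [successSetProb_insert hb (mem_powerset.1 hA)]
    ring
  · rw [successSetProb_insert_insert hb (mem_powerset.1 hA),
      card_insert_of_notMem fun h => hb (mem_powerset.1 hA h)]
    ring

lemma expectCard_const (S : Finset ι) (c : ℝ) : expectCard p S (fun _ => c) = c := by
  rw [expectCard, ← sum_mul, sum_successSetProb, one_mul]

lemma expectCard_add_const (S : Finset ι) (f : ℕ → ℝ) (c : ℝ) :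
    expectCard p S (fun m => f m + c) = expectCard p S f + c := by
  simp only [expectCard, mul_add, sum_add_distrib]
  rw [← sum_mul, sum_successSetProb, one_mul]

lemma expectCard_mono (hp : ∀ j, p j ∈ Set.Icc (0 : ℝ) 1) {S : Finset ι} {f g : ℕ → ℝ}
    (hfg : ∀ m ≤ S.card, f m ≤ g m) : expectCard p S f ≤ expectCard p S g :=
  sum_le_sum fun A hA => mul_le_mul_of_nonneg_left (hfg _ (card_le_card (mem_powerset.1 hA)))
    (successSetProb_nonneg hp S A)

lemma expectCard_natCast (S : Finset ι) : expectCard p S (fun m => (m : ℝ)) = ∑ j ∈ S, p j := by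
  induction S using Finset.induction_on with
  | empty => simp [expectCard, successSetProb]
  | insert b S hb ih =>
    rw [expectCard_insert hb, sum_insert hb, ← ih]
    push_cast
    rw [expectCard_add_const]
    ring

end SuccessSet

section Score

variable {ι : Type*} [Fintype ι] [DecidableEq ι]

lemma sum_boolFun_eq_sum_finset {β : Type*} [AddCommMonoid β] (G : (ι → Bool) → β) :
    ∑ y, G y = ∑ Y : Finset ι, G (fun j => decide (j ∈ Y)) :=
  (Fintype.sum_equiv
    { toFun := fun Y j => decide (j ∈ Y)
      invFun := fun y => univ.filter fun j => y j = true
      left_inv := fun Y => by ext; simp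
      right_inv := fun y => by ext; simp } _ _ fun _ => rfl).symm

lemma sum_finset_eq_sum_powerset_sum_powerset_compl {β : Type*} [AddCommMonoid β]
    (J : Finset ι) (F : Finset ι → β) :
    ∑ Y, F Y = ∑ A ∈ J.powerset, ∑ B ∈ Jᶜ.powerset, F (A ∪ B) := by
  rw [← sum_powerset_union disjoint_compl_right, union_compl, powerset_univ]

noncomputable def setScore (γ : ℝ) (p : ι → ℝ) (J : Finset ι) : ℝ :=
  ((∑ j ∈ J, p j) + γ) * expectCard p Jᶜ (fun m => ((J.card : ℝ) + m + γ)⁻¹)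

lemma exchange_lt {s x y B B' : ℝ} (hs : 0 ≤ s) (hxy : x < y) (hB : 0 < B) (hB' : B' ≤ B) :
    (s + x) * ((1 - y) * B + y * B') < (s + y) * ((1 - x) * B + x * B') := by
  have hdiff : (s + y) * ((1 - x) * B + x * B') - (s + x) * ((1 - y) * B + y * B') =
      (y - x) * (B + s * (B - B')) := by ring
  have hpos : 0 < (y - x) * (B + s * (B - B')) :=
    mul_pos (sub_pos.2 hxy) (add_pos_of_pos_of_nonneg hB (mul_nonneg hs (sub_nonneg.2 hB')))
  linarith

variable {γ : ℝ} {p : ι → ℝ}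

theorem setScore_insert_lt_setScore_insert (hγ : 0 ≤ γ) (hp : ∀ j, p j ∈ Set.Icc (0 : ℝ) 1)
    {K : Finset ι} {a b : ι} (ha : a ∉ K) (hb : b ∉ K) (hab : p a < p b) :
    setScore γ p (insert a K) < setScore γ p (insert b K) := by
  set L := (insert a (insert b K))ᶜ
  have haL : a ∉ L := by simp [L]
  have hbL : b ∉ L := by simp [L]
  have hcompl_a : (insert a K)ᶜ = insert b L := by
    ext j; simp only [L, mem_compl, mem_insert]; grind
  have hcompl_b : (insert b K)ᶜ = insert a L := by
    ext j; simp only [L, mem_compl, mem_insert]; grind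
  set f : ℕ → ℝ := fun m => (((K.card + 1 : ℕ) : ℝ) + m + γ)⁻¹
  have hf_pos : ∀ m : ℕ, 0 < ((K.card + 1 : ℕ) : ℝ) + m + γ := fun m =>
    add_pos_of_pos_of_nonneg (by positivity) hγ
  have hf_anti : ∀ {m n : ℕ}, m ≤ n → f n ≤ f m := fun hmn =>
    inv_anti₀ (hf_pos _) (by gcongr)
  set B := expectCard p L f
  set B' := expectCard p L fun m => f (m + 1)
  have hB : 0 < B := calc
    0 < f L.card := inv_pos.2 (hf_pos _)
    _ = expectCard p L fun _ => f L.card := (expectCard_const L _).symm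
    _ ≤ B := expectCard_mono hp fun m hm => hf_anti hm
  have hB' : B' ≤ B := expectCard_mono hp fun m _ => hf_anti (Nat.le_succ m)
  have hscore : ∀ {x y : ι}, x ∉ K → (insert x K)ᶜ = insert y L → y ∉ L →
      setScore γ p (insert x K) = ((∑ j ∈ K, p j) + γ + p x) * ((1 - p y) * B + p y * B') := by
    intro x y hx hcompl hy
    rw [setScore, hcompl, expectCard_insert hy, sum_insert hx, card_insert_of_notMem hx]
    ring
  rw [hscore ha hcompl_a hbL, hscore hb hcompl_b haL]
  exact exchange_lt (add_nonneg (sum_nonneg fun j _ => (hp j).1) hγ) hab hB hB'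

end Score

variable {d : ℕ}

lemma pmfOn_eq_sum_successSetProb (S : Finset (Fin d)) (p : Fin d → ℝ) (l : ℕ) :
    pmfOn S p l = ∑ A ∈ S.powersetCard l, successSetProb p S A := by
  rw [pmfOn, sum_boolFun_eq_sum_finset, ← sum_filter]
  refine sum_congr ?_ fun A hA => ?_
  · ext A
    have hsub : (∀ j ∉ S, j ∉ A) ↔ A ⊆ S := by
      simp only [subset_iff, not_imp_not]
    simp only [mem_filter, mem_univ, true_and, decide_eq_true_eq, decide_eq_false_iff_not,
      mem_powersetCard, filter_mem_eq_inter, hsub]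
    exact and_congr_right fun h => by rw [inter_eq_right.2 h]
  · simp only [decide_eq_true_eq]
    exact prod_ite_mem_eq_successSetProb (mem_powersetCard.1 hA).1

lemma expectCard_eq_sum_pmfOn (p : Fin d → ℝ) (S : Finset (Fin d)) (f : ℕ → ℝ) :
    expectCard p S f = ∑ l ∈ range (S.card + 1), pmfOn S p l * f l := by
  rw [expectCard, sum_powerset]
  refine sum_congr rfl fun l _ => ?_
  rw [pmfOn_eq_sum_successSetProb, sum_mul]
  exact sum_congr rfl fun A hA => by rw [(mem_powersetCard.1 hA).2]

lemma iou_eq_sum_finset (γ : ℝ) (p : Fin d → ℝ) (v : Fin d → Bool) :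
    iou γ p v = ∑ Y : Finset (Fin d), successSetProb p univ Y *
      ((((univ.filter fun j => v j = true) ∩ Y).card + γ) /
        (Y.card + (univ.filter fun j => v j = true).card
          - ((univ.filter fun j => v j = true) ∩ Y).card + γ)) := by
  rw [iou, sum_boolFun_eq_sum_finset]
  refine sum_congr rfl fun Y _ => ?_
  have hbw : bw p (fun j => decide (j ∈ Y)) = successSetProb p univ Y := by
    simpa [bw] using prod_ite_mem_eq_successSetProb (p := p) (subset_univ Y)
  have hinter : (univ.filter fun j => v j = true ∧ decide (j ∈ Y) = true) =
      (univ.filter fun j => v j = true) ∩ Y := by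
    ext j; simp
  have hcnt : cnt (fun j => decide (j ∈ Y)) = Y.card := by simp [cnt]
  rw [hbw, hinter, hcnt, cnt]

lemma iou_eq_setScore (γ : ℝ) (p : Fin d → ℝ) (v : Fin d → Bool) :
    iou γ p v = setScore γ p (univ.filter fun j => v j = true) := by
  set J := univ.filter fun j => v j = true
  rw [iou_eq_sum_finset, sum_finset_eq_sum_powerset_sum_powerset_compl J]
  have hterm : ∀ A ∈ J.powerset, ∀ B ∈ Jᶜ.powerset,
      successSetProb p univ (A ∪ B) *
        (((J ∩ (A ∪ B)).card + γ) / ((A ∪ B).card + J.card - (J ∩ (A ∪ B)).card + γ)) =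
      (successSetProb p J A * (A.card + γ)) *
        (successSetProb p Jᶜ B * ((J.card : ℝ) + B.card + γ)⁻¹) := by
    intro A hA B hB
    rw [mem_powerset] at hA hB
    have hJAB : J ∩ (A ∪ B) = A := by
      rw [inter_union_distrib_left, inter_eq_right.2 hA,
        disjoint_iff_inter_eq_empty.1 (disjoint_of_subset_right hB disjoint_compl_right),
        union_empty]
    have hprob : successSetProb p univ (A ∪ B) = successSetProb p J A * successSetProb p Jᶜ B := by
      rw [← successSetProb_union disjoint_compl_right hA hB, union_compl]
    rw [hprob, hJAB,
      card_union_of_disjoint (disjoint_of_subset_left hA (disjoint_of_subset_right hB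
        disjoint_compl_right))]
    push_cast
    rw [div_eq_mul_inv, show (A.card : ℝ) + B.card + J.card - A.card + γ =
      J.card + B.card + γ by ring]
    ring
  rw [sum_congr rfl fun A hA => sum_congr rfl fun B hB => hterm A hA B hB, ← sum_mul_sum]
  have hnum : ∑ A ∈ J.powerset, successSetProb p J A * (A.card + γ) = (∑ j ∈ J, p j) + γ := by
    rw [← expectCard_natCast (p := p) J, ← expectCard_add_const]
    rfl
  rw [hnum, setScore, expectCard]

section Rank

variable {ι : Type*} [Fintype ι] {p : ι → ℝ}

noncomputable def rank (p : ι → ℝ) (j : ι) : ℕ :=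
  (univ.filter fun j' => p j ≤ p j').card

lemma rank_lt_rank {a b : ι} (hab : p a < p b) : rank p b < rank p a := by
  refine card_lt_card ⟨fun j hj => ?_, fun h => ?_⟩
  · simp only [mem_filter, mem_univ, true_and] at hj ⊢
    exact hab.le.trans hj
  · have ha : a ∈ univ.filter fun j' => p b ≤ p j' := h (by simp)
    exact absurd (mem_filter.1 ha).2 (not_le.2 hab)

lemma rank_injective (hinj : Function.Injective p) : Function.Injective (rank p) := by
  intro a b h
  rcases lt_trichotomy (p a) (p b) with hab | hab | hab
  · exact absurd h (rank_lt_rank hab).ne'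
  · exact hinj hab
  · exact absurd h (rank_lt_rank hab).ne

lemma image_rank (hinj : Function.Injective p) :
    univ.image (rank p) = Icc 1 (Fintype.card ι) := by
  refine eq_of_subset_of_card_le (fun n hn => ?_) ?_
  · obtain ⟨j, -, rfl⟩ := mem_image.1 hn
    exact mem_Icc.2 ⟨card_pos.2 ⟨j, by simp⟩, card_filter_le _ _⟩
  · rw [Nat.card_Icc, card_image_of_injective _ (rank_injective hinj), card_univ]
    omega

end Rank

section TopIdx

variable {γ : ℝ} {p : Fin d → ℝ} {τ : ℕ}

lemma mem_topIdx {j : Fin d} : j ∈ topIdx p τ ↔ rank p j ≤ τ := by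
  simp [topIdx, rank]

lemma card_topIdx (hinj : Function.Injective p) (hτ : τ ≤ d) : (topIdx p τ).card = τ := by
  have htop : topIdx p τ = univ.filter fun j => rank p j ≤ τ := by ext; simp [mem_topIdx]
  calc (topIdx p τ).card
      = ((univ.image (rank p)).filter fun n => n ≤ τ).card := by
        rw [filter_image, card_image_of_injective _ (rank_injective hinj), htop]
    _ = (Icc 1 τ).card := by
        rw [image_rank hinj, Fintype.card_fin]
        congr 1
        ext n
        simp only [mem_filter, mem_Icc]
        omega
    _ = τ := by simp

lemma lt_of_notMem_topIdx_of_mem (hinj : Function.Injective p) {a b : Fin d}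
    (ha : a ∉ topIdx p τ) (hb : b ∈ topIdx p τ) : p a < p b := by
  refine lt_of_le_of_ne (not_lt.1 fun hba => ha ?_) fun h => ha (hinj h ▸ hb)
  exact mem_topIdx.2 ((rank_lt_rank hba).le.trans (mem_topIdx.1 hb))

lemma iouScore_eq_setScore (hinj : Function.Injective p) (hτ : τ ≤ d) :
    iouScore γ p τ = setScore γ p (topIdx p τ) := by
  rw [iouScore, setScore, expectCard_eq_sum_pmfOn, card_compl, Fintype.card_fin,
    card_topIdx hinj hτ, compl_eq_univ_sdiff]
  simp only [div_eq_mul_inv]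

theorem eq_topIdx_of_forall_setScore_le (hγ : 0 ≤ γ) (hp : ∀ j, p j ∈ Set.Icc (0 : ℝ) 1)
    (hinj : Function.Injective p) {J : Finset (Fin d)}
    (hJ : ∀ J' : Finset (Fin d), J'.card = J.card → setScore γ p J' ≤ setScore γ p J) :
    J = topIdx p J.card := by
  set T := topIdx p J.card
  have hT : T.card = J.card := card_topIdx hinj ((card_le_univ J).trans_eq (Fintype.card_fin d))
  by_contra hne
  obtain ⟨a, haJ, haT⟩ : ∃ a ∈ J, a ∉ T :=
    not_subset.1 fun h => hne (eq_of_subset_of_card_le h hT.le)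
  obtain ⟨b, hbT, hbJ⟩ : ∃ b ∈ T, b ∉ J :=
    not_subset.1 fun h => hne (eq_of_subset_of_card_le h hT.ge).symm
  have hK : insert a (J.erase a) = J := insert_erase haJ
  have hcard : (insert b (J.erase a)).card = J.card := by
    rw [card_insert_of_notMem fun h => hbJ (mem_of_mem_erase h), card_erase_of_mem haJ]
    have := card_pos.2 ⟨a, haJ⟩
    omega
  have hlt := setScore_insert_lt_setScore_insert hγ hp (notMem_erase a J)
    (fun h => hbJ (mem_of_mem_erase h)) (lt_of_notMem_topIdx_of_mem hinj haT hbT)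
  rw [hK] at hlt
  exact (hJ _ hcard).not_gt hlt

theorem setScore_le_setScore_topIdx (hγ : 0 ≤ γ) (hp : ∀ j, p j ∈ Set.Icc (0 : ℝ) 1)
    (hinj : Function.Injective p) (J : Finset (Fin d)) :
    setScore γ p J ≤ setScore γ p (topIdx p J.card) := by
  obtain ⟨M, hM, hmax⟩ := exists_max_image (univ.powersetCard J.card) (setScore γ p)
    ⟨J, mem_powersetCard_univ.2 rfl⟩
  have hMcard : M.card = J.card := mem_powersetCard_univ.1 hM
  have hMtop : M = topIdx p J.card := hMcard ▸ eq_topIdx_of_forall_setScore_le hγ hp hinj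
    fun J' hJ' => hmax J' (mem_powersetCard_univ.2 (hJ'.trans hMcard))
  exact hMtop ▸ hmax J (mem_powersetCard_univ.2 rfl)

end TopIdx

end IoUBayes

open IoUBayes in
theorem iou_bayes_rule_general {d : ℕ} (γ : ℝ) (hγ : 0 ≤ γ)
    (p : Fin d → ℝ) (hp : ∀ j, p j ∈ Set.Icc (0 : ℝ) 1)
    (hdist : Function.Injective p) (v : Fin d → Bool) :
    (∀ w : Fin d → Bool, iou γ p w ≤ iou γ p v) ↔
      ∃ τ ≤ d, (∀ τ' ≤ d, iouScore γ p τ' ≤ iouScore γ p τ) ∧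
        v = fun j => decide (j ∈ topIdx p τ) := by
  have hind (J : Finset (Fin d)) : iou γ p (fun j => decide (j ∈ J)) = setScore γ p J := by
    simp [iou_eq_setScore]
  have hcard (J : Finset (Fin d)) : J.card ≤ d := (card_le_univ J).trans_eq (Fintype.card_fin d)
  set J := univ.filter fun j => v j = true
  have hv : v = fun j => decide (j ∈ J) := by ext j; simp [J]
  constructor
  · intro hmax
    have hJ : J = topIdx p J.card := eq_topIdx_of_forall_setScore_le hγ hp hdist fun J' _ => by
      rw [← hind, ← hind, ← hv]
      exact hmax _
    refine ⟨J.card, hcard J, fun τ' hτ' => ?_, by rwa [← hJ]⟩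
    rw [iouScore_eq_setScore hdist hτ', iouScore_eq_setScore hdist (hcard J), ← hJ, ← hind,
      ← hind, ← hv]
    exact hmax _
  · rintro ⟨τ, hτ, hbest, rfl⟩ w
    set K := univ.filter fun j => w j = true
    calc iou γ p w = setScore γ p K := iou_eq_setScore γ p w
      _ ≤ setScore γ p (topIdx p K.card) := setScore_le_setScore_topIdx hγ hp hdist K
      _ = iouScore γ p K.card := (iouScore_eq_setScore hdist (hcard K)).symm
      _ ≤ iouScore γ p τ := hbest _ (hcard K)
      _ = iou γ p (fun j => decide (j ∈ topIdx p τ)) := by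
        rw [iouScore_eq_setScore hdist hτ, hind]

/-- **The Bayes rule for IoU-segmentation.** `v` maximizes `IoU_γ(·; p)` over `{0,1}^d`
iff `v` is the indicator of the top-`τ*` index set for some `τ*` maximizing `ϖ` over
`{0, 1, …, d}`. -/
theorem iou_bayes_rule {d : ℕ} (hd : 1 ≤ d) (γ : ℝ) (hγ : 0 ≤ γ)
    (p : Fin d → ℝ) (hp : ∀ j, p j ∈ Set.Icc (0 : ℝ) 1)
    (hdist : Function.Injective p) (v : Fin d → Bool) :
    (∀ w : Fin d → Bool, iou γ p w ≤ iou γ p v) ↔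
      ∃ τ ≤ d, (∀ τ' ≤ d, iouScore γ p τ' ≤ iouScore γ p τ) ∧
        v = fun j => decide (j ∈ topIdx p τ) :=
  iou_bayes_rule_general γ hγ p hp hdist v
end

section
/- For any real τ ≥ 1 such that ((d+1)/d) Σ_{j=1}^d p_j + τ − 1 > 0: 1/(Σ_{j=1}^d p_j + τ) ≤ E[1/(Γ + τ)] ≤ 1/( ((d+1)/d) Σ_{j=1}^d p_j + τ − 1 ). -/
/-!
Write `F(M, τ) = E[1/(Γ_M + τ)]`, where `Γ_M` is the Poisson-binomial sum with parameter
multiset `M`, and `s = ∑ⱼ pⱼ`. The lower bound is Jensen's inequality for `x ↦ 1/(x + τ)`, proved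
one Bernoulli variable at a time.

For the upper bound, add a Bernoulli variable whose parameter is the mean `q = s/d`, giving
`N = q :: M`. By the size-bias identity,
`E[Γ_N/(Γ_N + τ - 1)] = q F(M, τ) + ∑ⱼ pⱼ F(q :: M ∖ pⱼ, τ)`.
Replacing `pⱼ` by `q` raises `F(M, τ)` by `(pⱼ - q) Δⱼ` with `Δⱼ ≥ 0`, and since the `pⱼ` and
the `pⱼ Δⱼ` are similarly ordered, Chebyshev's sum inequality gives `∑ⱼ pⱼ (pⱼ - q) Δⱼ ≥ 0`; so the
right side is at least `(s + q) F(M, τ)`. On the other hand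
`Γ_N/(Γ_N + τ - 1) = 1 - (τ - 1)/(Γ_N + τ - 1)` and `Γ_N ≤ Γ_M + 1`, so the left side is at most
`1 - (τ - 1) F(M, τ)`. Hence `(s + q + τ - 1) F(M, τ) ≤ 1`, and `s + q = ((d + 1)/d) s`.
-/

open Finset

/-- `E[1/(Γ + τ)]` for the Poisson-binomial variable `Γ = Σⱼ Bⱼ`. -/
noncomputable def expInvShift {d : ℕ} (p : Fin d → ℝ) (τ : ℝ) : ℝ :=
  ∑ y : Fin d → Bool, bw p y / ((cnt y : ℝ) + τ)

namespace PoissonBinomial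

def listExpect : List ℝ → (ℕ → ℝ) → ℝ
  | [], f => f 0
  | a :: l, f => (1 - a) * listExpect l f + a * listExpect l (fun k => f (k + 1))

theorem listExpect_perm {l₁ l₂ : List ℝ} (h : l₁.Perm l₂) (f : ℕ → ℝ) :
    listExpect l₁ f = listExpect l₂ f := by
  induction h generalizing f with
  | nil => rfl
  | cons a _ ih => simp only [listExpect, ih]
  | swap a b l => simp only [listExpect]; ring
  | trans _ _ ih₁ ih₂ => rw [ih₁, ih₂]

/-- `expect M f = E[f(Γ)]`, where `Γ` is a sum of independent Bernoulli variables whose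
parameters are the elements of `M`. -/
noncomputable def expect (M : Multiset ℝ) (f : ℕ → ℝ) : ℝ :=
  Quot.liftOn M (listExpect · f) fun _ _ h => listExpect_perm h f

@[simp] theorem expect_coe (l : List ℝ) (f : ℕ → ℝ) : expect l f = listExpect l f := rfl

@[simp] theorem expect_zero (f : ℕ → ℝ) : expect 0 f = f 0 := rfl

@[simp] theorem expect_cons (a : ℝ) (M : Multiset ℝ) (f : ℕ → ℝ) :
    expect (a ::ₘ M) f = (1 - a) * expect M f + a * expect M (fun k => f (k + 1)) :=
  Quot.inductionOn M fun _ => rfl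

theorem expect_const (M : Multiset ℝ) (c : ℝ) : expect M (fun _ => c) = c := by
  induction M using Multiset.induction_on with
  | empty => rfl
  | cons a M ih => simp only [expect_cons, ih]; ring

theorem expect_add (M : Multiset ℝ) (f g : ℕ → ℝ) :
    expect M (fun k => f k + g k) = expect M f + expect M g := by
  induction M using Multiset.induction_on generalizing f g with
  | empty => rfl
  | cons a M ih => simp only [expect_cons, ih]; ring

theorem expect_const_mul (M : Multiset ℝ) (c : ℝ) (f : ℕ → ℝ) :
    expect M (fun k => c * f k) = c * expect M f := by
  induction M using Multiset.induction_on generalizing f with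
  | empty => rfl
  | cons a M ih => simp only [expect_cons, ih]; ring

theorem expect_mono {M : Multiset ℝ} (hM : ∀ a ∈ M, a ∈ Set.Icc (0 : ℝ) 1) {f g : ℕ → ℝ}
    (hfg : ∀ k, f k ≤ g k) : expect M f ≤ expect M g := by
  induction M using Multiset.induction_on generalizing f g with
  | empty => exact hfg 0
  | cons a M ih =>
    obtain ⟨ha₀, ha₁⟩ := hM a (Multiset.mem_cons_self a M)
    have hM' := fun b hb => hM b (Multiset.mem_cons_of_mem hb)
    have h₀ := ih hM' hfg
    have h₁ := ih hM' fun k => hfg (k + 1)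
    simp only [expect_cons]
    gcongr

theorem expect_comp_succ_le_cons {M : Multiset ℝ} (hM : ∀ a ∈ M, a ∈ Set.Icc (0 : ℝ) 1) {a : ℝ}
    (ha : a ≤ 1) {f : ℕ → ℝ} (hf : ∀ k, f (k + 1) ≤ f k) :
    expect M (fun k => f (k + 1)) ≤ expect (a ::ₘ M) f := by
  have := expect_mono hM hf
  rw [expect_cons]
  nlinarith

/-- The size-bias identity of the Poisson-binomial law. -/
theorem sum_map_mul_expect_erase [DecidableEq ℝ] (M : Multiset ℝ) (f : ℕ → ℝ) :
    (M.map fun a => a * expect (M.erase a) fun k => f (k + 1)).sum =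
      expect M fun k => k * f k := by
  induction M using Multiset.induction_on generalizing f with
  | empty => simp
  | cons a M ih =>
    have hcons : ∀ b ∈ M, b * expect ((a ::ₘ M).erase b) (fun k => f (k + 1)) =
        (1 - a) * (b * expect (M.erase b) fun k => f (k + 1)) +
          a * (b * expect (M.erase b) fun k => f (k + 1 + 1)) := by
      intro b hb
      rw [Multiset.erase_cons_tail_of_mem hb, expect_cons]
      ring
    have hshift : (expect M fun k => ((k + 1 : ℕ) : ℝ) * f (k + 1)) =
        (expect M fun k => k * f (k + 1)) + expect M fun k => f (k + 1) := by
      rw [← expect_add]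
      congr 1
      ext k
      push_cast
      ring
    rw [Multiset.map_cons, Multiset.sum_cons, Multiset.erase_cons_head,
      Multiset.map_congr rfl hcons, Multiset.sum_map_add, Multiset.sum_map_mul_left,
      Multiset.sum_map_mul_left, ih, ih fun k => f (k + 1), expect_cons, hshift]
    ring

noncomputable def expectInv (M : Multiset ℝ) (τ : ℝ) : ℝ := expect M fun k => 1 / (k + τ)

theorem expectInv_cons (a : ℝ) (M : Multiset ℝ) (τ : ℝ) :
    expectInv (a ::ₘ M) τ = (1 - a) * expectInv M τ + a * expectInv M (τ + 1) := by
  simp only [expectInv, expect_cons, Nat.cast_succ, add_assoc, add_comm 1 τ]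

theorem one_div_sum_add_le_expectInv {M : Multiset ℝ} (hM : ∀ a ∈ M, a ∈ Set.Icc (0 : ℝ) 1)
    {τ : ℝ} (hτ : 0 < τ) : 1 / (M.sum + τ) ≤ expectInv M τ := by
  induction M using Multiset.induction_on generalizing τ with
  | empty => simp [expectInv]
  | cons a M ih =>
    obtain ⟨ha₀, ha₁⟩ := hM a (Multiset.mem_cons_self a M)
    have hM' := fun b hb => hM b (Multiset.mem_cons_of_mem hb)
    have hA : 0 < M.sum + τ :=
      add_pos_of_nonneg_of_pos (Multiset.sum_nonneg fun b hb => (hM' b hb).1) hτ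
    -- convexity of `x ↦ 1 / x`, as `A + a = (1 - a) A + a (A + 1)`
    have convex : 1 / (a + M.sum + τ) ≤
        (1 - a) * (1 / (M.sum + τ)) + a * (1 / (M.sum + (τ + 1))) := by
      rw [← add_assoc, mul_one_div, mul_one_div, div_add_div _ _ hA.ne' (by linarith),
        div_le_div_iff₀ (by linarith) (by positivity)]
      nlinarith
    rw [Multiset.sum_cons, expectInv_cons]
    calc 1 / (a + M.sum + τ) ≤ _ := convex
      _ ≤ _ := by gcongr; exacts [ih hM' hτ, ih hM' (by linarith)]

theorem _root_.Finset.map_val_eq_cons_map_erase_val {ι α : Type*} [DecidableEq ι] (p : ι → α)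
    {s : Finset ι} {i : ι} (hi : i ∈ s) : s.val.map p = p i ::ₘ (s.erase i).val.map p := by
  rw [Finset.erase_val, ← Multiset.map_cons, Multiset.cons_erase hi]

section Exchange

variable {ι : Type*} [Fintype ι] [DecidableEq ι] {p : ι → ℝ}

theorem sum_mul_expect_le_sum_mul_expect_mean_cons (hp : ∀ i, p i ∈ Set.Icc (0 : ℝ) 1)
    {f : ℕ → ℝ} (hf : ∀ k, f (k + 1) ≤ f k) :
    (∑ i, p i) * expect (univ.val.map p) f ≤
      ∑ i, p i * expect ((∑ j, p j) / Fintype.card ι ::ₘ (univ.erase i).val.map p) f := by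
  set q := (∑ j, p j) / Fintype.card ι
  let Δ : Multiset ℝ → ℝ := fun S => expect S f - expect S fun k => f (k + 1)
  have hΔ (t : Finset ι) : 0 ≤ Δ (t.val.map p) := by
    have := expect_mono (M := t.val.map p) (by simpa using fun i _ => hp i) hf
    simp only [Δ]; linarith
  have hreplace (i : ι) : expect (q ::ₘ (univ.erase i).val.map p) f =
      expect (univ.val.map p) f + (p i - q) * Δ ((univ.erase i).val.map p) := by
    rw [map_val_eq_cons_map_erase_val p (mem_univ i), expect_cons, expect_cons]; ring
  have hmonovary : Monovary p fun i => p i * Δ ((univ.erase i).val.map p) := by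
    intro i j hlt
    by_contra! hji
    have hij : j ≠ i := by rintro rfl; exact lt_irrefl _ hlt
    set S := ((univ.erase i).erase j).val.map p
    have hi : (univ.erase i).val.map p = p j ::ₘ S :=
      map_val_eq_cons_map_erase_val p (mem_erase.2 ⟨hij, mem_univ j⟩)
    have hj : (univ.erase j).val.map p = p i ::ₘ S := by
      rw [map_val_eq_cons_map_erase_val p (mem_erase.2 ⟨hij.symm, mem_univ i⟩), erase_right_comm]
    have hswap : p i * Δ ((univ.erase i).val.map p) - p j * Δ ((univ.erase j).val.map p) =
        (p i - p j) * Δ S := by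
      simp only [Δ, hi, hj, expect_cons]; ring
    nlinarith [hΔ ((univ.erase i).erase j)]
  have hchebyshev := hmonovary.sum_mul_sum_le_card_mul_sum
  simp only [hreplace, mul_add, sum_add_distrib, ← sum_mul]
  rw [le_add_iff_nonneg_right]
  rcases isEmpty_or_nonempty ι with hι | hι
  · simp
  have hcard : (0 : ℝ) < Fintype.card ι := by exact_mod_cast Fintype.card_pos
  calc 0 ≤ ∑ i, p i * (p i * Δ ((univ.erase i).val.map p)) -
        q * ∑ i, p i * Δ ((univ.erase i).val.map p) := by
        rw [sub_nonneg, div_mul_eq_mul_div, div_le_iff₀ hcard]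
        linarith
    _ = _ := by
        rw [mul_sum, ← sum_sub_distrib]
        exact sum_congr rfl fun i _ => by ring

theorem sum_map_mul_erase_cons_map_univ_val (q : ℝ) (G : Multiset ℝ → ℝ) :
    ((q ::ₘ univ.val.map p).map fun a => a * G ((q ::ₘ univ.val.map p).erase a)).sum =
      q * G (univ.val.map p) + ∑ i, p i * G (q ::ₘ (univ.erase i).val.map p) := by
  rw [Multiset.map_cons, Multiset.sum_cons, Multiset.erase_cons_head, sum_eq_multiset_sum,
    Multiset.map_map]
  congr 2
  refine Multiset.map_congr rfl fun i _ => ?_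
  rw [Function.comp_apply,
    Multiset.erase_cons_tail_of_mem (Multiset.mem_map_of_mem p (mem_univ i)),
    map_val_eq_cons_map_erase_val p (mem_univ i), Multiset.erase_cons_head]

end Exchange

theorem expect_cons_mul_one_div_add_sub_one_le {M : Multiset ℝ}
    (hM : ∀ a ∈ M, a ∈ Set.Icc (0 : ℝ) 1) {a : ℝ} (ha : a ∈ Set.Icc (0 : ℝ) 1) {τ : ℝ}
    (hτ : 1 ≤ τ) :
    (expect (a ::ₘ M) fun k => k * (1 / (k + τ - 1))) ≤ 1 - (τ - 1) * expectInv M τ := by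
  let h : ℕ → ℝ := fun k => (τ - 1) * (1 / (k + τ - 1))
  have hsum_le : (expect (a ::ₘ M) fun k => k * (1 / (k + τ - 1))) + expect (a ::ₘ M) h ≤ 1 := by
    rw [← expect_add]
    refine (expect_mono (Multiset.forall_mem_cons.2 ⟨ha, hM⟩) fun k => ?_).trans_eq
      (expect_const _ 1)
    rw [← add_mul, mul_one_div, add_sub_assoc']
    exact div_self_le_one _
  -- `Γ_{a :: M} ≤ Γ_M + 1` and `h` is antitone
  have hshift : (τ - 1) * expectInv M τ ≤ expect (a ::ₘ M) h := by
    refine le_trans (le_of_eq ?_) (expect_comp_succ_le_cons hM ha.2 fun k => ?_)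
    · rw [expectInv, ← expect_const_mul]
      congr 1
      ext k
      simp only [h]
      push_cast
      ring_nf
    · rcases hτ.eq_or_lt with rfl | hτ₁
      · simp [h]
      · have : 0 < (k : ℝ) + τ - 1 := by linarith [k.cast_nonneg (α := ℝ)]
        simp only [h]
        push_cast
        gcongr
        linarith
  linarith

theorem sum_add_mean_add_sub_one_mul_expectInv_le_one {ι : Type*} [Fintype ι] [DecidableEq ι]
    {p : ι → ℝ} (hp : ∀ i, p i ∈ Set.Icc (0 : ℝ) 1) {τ : ℝ} (hτ : 1 ≤ τ) :
    (∑ i, p i + (∑ i, p i) / Fintype.card ι + (τ - 1)) * expectInv (univ.val.map p) τ ≤ 1 := by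
  set q := (∑ i, p i) / Fintype.card ι
  set M := univ.val.map p
  have hM : ∀ a ∈ M, a ∈ Set.Icc (0 : ℝ) 1 := by simpa [M] using hp
  have hq : q ∈ Set.Icc (0 : ℝ) 1 :=
    ⟨div_nonneg (sum_nonneg fun i _ => (hp i).1) (Nat.cast_nonneg _),
      div_le_one_of_le₀ ((sum_le_sum fun i _ => (hp i).2).trans_eq (by simp)) (Nat.cast_nonneg _)⟩
  have hsize_bias : ((q ::ₘ M).map fun a => a * expectInv ((q ::ₘ M).erase a) τ).sum =
      expect (q ::ₘ M) fun k => k * (1 / (k + τ - 1)) := by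
    have hshift : (fun k : ℕ => 1 / (((k + 1 : ℕ) : ℝ) + τ - 1)) = fun k : ℕ => 1 / (k + τ) := by
      funext k; push_cast; ring_nf
    rw [← sum_map_mul_expect_erase, hshift]
    rfl
  have hexchange : (∑ i, p i) * expectInv M τ ≤
      ∑ i, p i * expectInv (q ::ₘ (univ.erase i).val.map p) τ :=
    sum_mul_expect_le_sum_mul_expect_mean_cons hp fun k => by
      push_cast; gcongr; linarith [k.cast_nonneg (α := ℝ)]
  have hsplit := sum_map_mul_erase_cons_map_univ_val q (expectInv · τ) (p := p)
  have hupper := expect_cons_mul_one_div_add_sub_one_le hM hq hτ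
  linarith

end PoissonBinomial

open PoissonBinomial

theorem cnt_cons {d : ℕ} (b : Bool) (y : Fin d → Bool) :
    cnt (Fin.cons b y : Fin (d + 1) → Bool) = cnt y + b.toNat := by
  simp only [cnt, card_filter, Fin.sum_univ_succ, Fin.cons_zero, Fin.cons_succ]
  cases b <;> simp [add_comm]

theorem bw_cons {d : ℕ} (p : Fin (d + 1) → ℝ) (b : Bool) (y : Fin d → Bool) :
    bw p (Fin.cons b y) = (if b then p 0 else 1 - p 0) * bw (fun i => p i.succ) y := by
  simp [bw, Fin.prod_univ_succ]

theorem sum_bw_mul_eq_listExpect {d : ℕ} (p : Fin d → ℝ) (f : ℕ → ℝ) :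
    ∑ y, bw p y * f (cnt y) = listExpect (List.ofFn p) f := by
  induction d generalizing f with
  | zero => simp [bw, cnt, listExpect]
  | succ d ih =>
    rw [← Fintype.sum_equiv (Fin.consEquiv fun _ => Bool)
      (fun y => bw p (Fin.cons y.1 y.2) * f (cnt (Fin.cons y.1 y.2 : Fin (d + 1) → Bool))) _
      fun _ => rfl, Fintype.sum_prod_type, Fintype.sum_bool, List.ofFn_succ, listExpect, ← ih,
      ← ih, mul_sum, mul_sum, add_comm]
    simp only [bw_cons, cnt_cons]
    congr 1 <;> refine sum_congr rfl fun y _ => ?_ <;> simp <;> ring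

theorem expInvShift_eq_expectInv {d : ℕ} (p : Fin d → ℝ) (τ : ℝ) :
    expInvShift p τ = expectInv (univ.val.map p) τ := by
  have h := sum_bw_mul_eq_listExpect p fun k => 1 / (k + τ)
  simp only [mul_one_div] at h
  rw [expInvShift, h, Fin.univ_val_map, expectInv, expect_coe]

theorem expInvShift_bounds_general {d : ℕ} (p : Fin d → ℝ)
    (hp : ∀ j, p j ∈ Set.Icc (0 : ℝ) 1) (τ : ℝ) (hτ : 1 ≤ τ)
    (hden : 0 < ((d : ℝ) + 1) / (d : ℝ) * (∑ j, p j) + τ - 1) :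
    1 / ((∑ j, p j) + τ) ≤ expInvShift p τ ∧
    expInvShift p τ ≤ 1 / (((d : ℝ) + 1) / (d : ℝ) * (∑ j, p j) + τ - 1) := by
  have hM : ∀ a ∈ univ.val.map p, a ∈ Set.Icc (0 : ℝ) 1 := by simpa using hp
  have hmean : ((d : ℝ) + 1) / d * ∑ j, p j = ∑ j, p j + (∑ j, p j) / Fintype.card (Fin d) := by
    rcases d.eq_zero_or_pos with rfl | hd
    · simp
    · rw [Fintype.card_fin]; field_simp
  rw [expInvShift_eq_expectInv]
  constructor
  · simpa [sum_eq_multiset_sum] using one_div_sum_add_le_expectInv hM (by linarith)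
  · rw [le_div_iff₀ hden, mul_comm, hmean, add_sub_assoc]
    exact sum_add_mean_add_sub_one_mul_expectInv_le_one hp hτ

/-- **Bounds on the expected reciprocal of a shifted Poisson-binomial variable.** For any
real `τ ≥ 1` with `((d+1)/d) Σⱼ pⱼ + τ - 1 > 0`:
`1/(Σⱼ pⱼ + τ) ≤ E[1/(Γ + τ)] ≤ 1/(((d+1)/d) Σⱼ pⱼ + τ - 1)`. -/
theorem expInvShift_bounds {d : ℕ} (hd : 1 ≤ d) (p : Fin d → ℝ)
    (hp : ∀ j, p j ∈ Set.Icc (0 : ℝ) 1) (τ : ℝ) (hτ : 1 ≤ τ)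
    (hden : 0 < ((d : ℝ) + 1) / (d : ℝ) * (∑ j, p j) + τ - 1) :
    1 / ((∑ j, p j) + τ) ≤ expInvShift p τ ∧
    expInvShift p τ ≤ 1 / (((d : ℝ) + 1) / (d : ℝ) * (∑ j, p j) + τ - 1) :=
  expInvShift_bounds_general p hp τ hτ hden
end
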